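/- arXiv:1706.01365 — 5 statements merged into one kernel-verified Lean document; each statement's English description precedes it below -/
import Mathlib

section
/- Let 0 < t < k < n with t < k < 2t and n ≥ 2k. Then binom(n,t)/binom(k,t) > binom(n,2t-k)/binom(t,2t-k), i.e. binom(n,t) * binom(t,2t-k) > binom(n,2t-k) * binom(k,t). -/
lemma choose_strict_top {a b r : ℕ} (hr : 0 < r) (hra : r ≤ a) (hab : a < b) :
    a.choose r < b.choose r := by
  have h1 : a.choose r < (a+1).choose r := by
    obtain ⟨r', rfl⟩ := Nat.exists_eq_succ_of_ne_zero hr.ne'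
    rw [Nat.choose_succ_succ]
    have : 0 < a.choose r' := Nat.choose_pos (le_trans (Nat.le_succ _) hra)
    omega
  exact lt_of_lt_of_le h1 (Nat.choose_le_choose r hab)

theorem steiner_exceeds_kernels (n k t : ℕ) (ht : 0 < t) (htk : t < k) (hk2t : k < 2 * t)
    (hn : 2 * k ≤ n) :
    n.choose t * t.choose (2 * t - k) > n.choose (2 * t - k) * k.choose t := by
  set s := 2 * t - k with hs
  have hst : s ≤ t := by omega
  have htn : t ≤ n := by omega
  have hts : t - s = k - t := by omega
  rw [Nat.choose_mul (n := n) hst, hts, ← Nat.choose_symm htk.le]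
  have hpos : 0 < n.choose s := Nat.choose_pos (by omega)
  refine (Nat.mul_lt_mul_left hpos).mpr ?_
  exact choose_strict_top (by omega) (by omega) (by omega)
end

section
/- Let U be a family of k-element subsets of {1,...,n} such that any two distinct members of U intersect in exactly k-1 points. Then either all members of U contain a common (k-1)-element subset, or all members of U are contained in a common (k+1)-element set. -/
open Finset

theorem sunflower_or_contained (n k : ℕ) (hk : 1 ≤ k) (hkn : k ≤ n)
    (U : Finset (Finset (Fin n)))
    (hcard : ∀ A ∈ U, A.card = k)
    (hint : ∀ A ∈ U, ∀ B ∈ U, A ≠ B → (A ∩ B).card = k - 1) :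
    (∃ K : Finset (Fin n), K.card = k - 1 ∧ ∀ A ∈ U, K ⊆ A) ∨
    (∃ W : Finset (Fin n), W.card = k + 1 ∧ ∀ A ∈ U, A ⊆ W) := by
  classical
  by_cases hU2 : ∃ A ∈ U, ∃ B ∈ U, A ≠ B
  · obtain ⟨A, hA, B, hB, hAB⟩ := hU2
    set K := A ∩ B with hKdef
    have hAk := hcard A hA
    have hBk := hcard B hB
    have hK : K.card = k - 1 := hint A hA B hB hAB
    have hsdA : (A \ B).card = 1 := by
      have := card_sdiff_add_card_inter A B
      rw [← hKdef] at this
      omega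
    have hsdB : (B \ A).card = 1 := by
      have := card_sdiff_add_card_inter B A
      rw [inter_comm, ← hKdef] at this
      omega
    obtain ⟨a, ha⟩ := card_eq_one.mp hsdA
    obtain ⟨b, hb⟩ := card_eq_one.mp hsdB
    have haA : a ∈ A ∧ a ∉ B := by
      have : a ∈ A \ B := by rw [ha]; exact mem_singleton_self a
      exact ⟨(mem_sdiff.mp this).1, (mem_sdiff.mp this).2⟩
    have hbB : b ∈ B ∧ b ∉ A := by
      have : b ∈ B \ A := by rw [hb]; exact mem_singleton_self b
      exact ⟨(mem_sdiff.mp this).1, (mem_sdiff.mp this).2⟩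
    have hAsub : A ⊆ K ∪ {a} := by
      intro y hy
      by_cases hyB : y ∈ B
      · exact mem_union_left _ (mem_inter.mpr ⟨hy, hyB⟩)
      · have : y ∈ A \ B := mem_sdiff.mpr ⟨hy, hyB⟩
        rw [ha] at this
        exact mem_union_right _ this
    have hBsub : B ⊆ K ∪ {b} := by
      intro y hy
      by_cases hyA : y ∈ A
      · exact mem_union_left _ (mem_inter.mpr ⟨hyA, hy⟩)
      · have : y ∈ B \ A := mem_sdiff.mpr ⟨hy, hyA⟩
        rw [hb] at this
        exact mem_union_right _ this
    have hABcard : (A ∪ B).card = k + 1 := by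
      have := card_union_add_card_inter A B
      rw [← hKdef] at this
      omega
    have L1 : ∀ C ∈ U, ¬ K ⊆ C → C ⊆ A ∪ B := by
      intro C hC hKC
      have hCk := hcard C hC
      obtain ⟨x, hxK, hxC⟩ := not_subset.mp hKC
      have hk2 : 2 ≤ k := by
        have : K.Nonempty := ⟨x, hxK⟩
        have := card_pos.mpr this
        omega
      have hCneA : C ≠ A := by
        rintro rfl
        exact hxC (mem_of_mem_inter_left hxK)
      have hCneB : C ≠ B := by
        rintro rfl
        exact hxC (mem_of_mem_inter_right hxK)
      have hCA := hint C hC A hA hCneA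
      have hCB := hint C hC B hB hCneB
      have hKCsmall : (K ∩ C).card ≤ k - 2 := by
        have hsub : K ∩ C ⊆ K.erase x := by
          intro y hy
          rcases mem_inter.mp hy with ⟨hyK, hyC⟩
          exact mem_erase.mpr ⟨fun h => hxC (h ▸ hyC), hyK⟩
        have := card_le_card hsub
        rw [card_erase_of_mem hxK, hK] at this
        omega
      have haC : a ∈ C := by
        by_contra haC
        have hsub : C ∩ A ⊆ K ∩ C := by
          intro y hy
          rcases mem_inter.mp hy with ⟨hyC, hyA⟩
          rcases mem_union.mp (hAsub hyA) with h | h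
          · exact mem_inter.mpr ⟨h, hyC⟩
          · exact absurd (mem_singleton.mp h ▸ hyC) haC
        have := card_le_card hsub
        omega
      have hbC : b ∈ C := by
        by_contra hbC
        have hsub : C ∩ B ⊆ K ∩ C := by
          intro y hy
          rcases mem_inter.mp hy with ⟨hyC, hyB⟩
          rcases mem_union.mp (hBsub hyB) with h | h
          · exact mem_inter.mpr ⟨h, hyC⟩
          · exact absurd (mem_singleton.mp h ▸ hyC) hbC
        have := card_le_card hsub
        omega
      have hsub : (C ∩ A) ∪ {b} ⊆ C ∩ (A ∪ B) := by
        intro y hy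
        rcases mem_union.mp hy with h | h
        · rcases mem_inter.mp h with ⟨hyC, hyA⟩
          exact mem_inter.mpr ⟨hyC, mem_union_left _ hyA⟩
        · rw [mem_singleton.mp h]
          exact mem_inter.mpr ⟨hbC, mem_union_right _ hbB.1⟩
      have hdisj : Disjoint (C ∩ A) {b} := by
        simp only [disjoint_singleton_right, mem_inter, not_and]
        intro _
        exact hbB.2
      have hcardu : ((C ∩ A) ∪ {b}).card = k := by
        rw [card_union_of_disjoint hdisj, hCA, card_singleton]
        omega
      have hle : k ≤ (C ∩ (A ∪ B)).card := hcardu ▸ card_le_card hsub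
      have : C ∩ (A ∪ B) = C :=
        eq_of_subset_of_card_le inter_subset_left (by omega)
      exact inter_eq_left.mp this
    by_cases hall : ∀ C ∈ U, K ⊆ C
    · exact Or.inl ⟨K, hK, hall⟩
    · right
      push_neg at hall
      obtain ⟨C0, hC0, hKC0⟩ := hall
      have hC0sub : C0 ⊆ A ∪ B := L1 C0 hC0 hKC0
      refine ⟨A ∪ B, hABcard, ?_⟩
      intro D hD
      by_cases hKD : K ⊆ D
      · have hDk := hcard D hD
        have hDne : D ≠ C0 := by rintro rfl; exact hKC0 hKD
        have hDC0 := hint D hD C0 hC0 hDne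
        obtain ⟨x, hxK, hxC0⟩ := not_subset.mp hKC0
        have hk2 : 2 ≤ k := by
          have := card_pos.mpr ⟨x, hxK⟩
          omega
        have hd1 : (D \ K).card = 1 := by
          rw [card_sdiff_of_subset hKD, hDk, hK]
          omega
        obtain ⟨d, hd⟩ := card_eq_one.mp hd1
        have hDsub : D ⊆ K ∪ {d} := by
          intro y hy
          by_cases hyK : y ∈ K
          · exact mem_union_left _ hyK
          · have : y ∈ D \ K := mem_sdiff.mpr ⟨hy, hyK⟩
            rw [hd] at this
            exact mem_union_right _ this
        have hdC0 : d ∈ C0 := by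
          by_contra h
          have hsub : D ∩ C0 ⊆ K.erase x := by
            intro y hy
            rcases mem_inter.mp hy with ⟨hyD, hyC0⟩
            rcases mem_union.mp (hDsub hyD) with h2 | h2
            · exact mem_erase.mpr ⟨fun hh => hxC0 (hh ▸ hyC0), h2⟩
            · exact absurd (mem_singleton.mp h2 ▸ hyC0) h
          have := card_le_card hsub
          rw [card_erase_of_mem hxK, hK, hDC0] at this
          omega
        intro y hy
        rcases mem_union.mp (hDsub hy) with h | h
        · exact mem_union_left _ (mem_of_mem_inter_left h)
        · exact hC0sub (mem_singleton.mp h ▸ hdC0)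
      · exact L1 D hD hKD
  · push_neg at hU2
    left
    rcases U.eq_empty_or_nonempty with rfl | ⟨A, hA⟩
    · obtain ⟨K, _, hKc⟩ := Finset.exists_subset_card_eq (s := (Finset.univ : Finset (Fin n))) (n := k - 1)
        (by simp only [card_univ, Fintype.card_fin]; omega)
      exact ⟨K, hKc, by simp⟩
    · obtain ⟨K, hKA, hKc⟩ := Finset.exists_subset_card_eq (s := A) (n := k - 1)
        (by rw [hcard A hA]; omega)
      refine ⟨K, hKc, fun B hB => ?_⟩
      rw [hU2 B hB A hA]
      exact hKA
end

section
/- For k ≥ 3 and n > 2k, any family S of k-element subsets of {1,...,n} such that any two distinct members intersect in 0 or k-1 points has size at most n. -/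
open Finset

lemma comp_bound {n k : ℕ} (hk : 3 ≤ k) (C : Finset (Finset (Fin n)))
    (hc : ∀ X ∈ C, X.card = k)
    (hi : ∀ X ∈ C, ∀ Y ∈ C, X ≠ Y → (X ∩ Y).card = k - 1) :
    C.card ≤ (C.sup id).card := by
  rcases C.eq_empty_or_nonempty with hE | ⟨A₀, hA₀⟩
  · simp [hE]
  by_cases h1 : C.card ≤ 1
  · have hCA : C = {A₀} := by
      have := Finset.card_le_one.mp h1
      exact Finset.eq_singleton_iff_unique_mem.mpr ⟨hA₀, fun x hx => this x hx A₀ hA₀⟩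
    subst hCA
    simp only [Finset.sup_singleton, id, Finset.card_singleton, hc A₀ (by simp)]
    omega
  push_neg at h1
  obtain ⟨A, hA, B, hB, hAB⟩ := Finset.one_lt_card.mp h1
  have hAk := hc A hA
  have hBk := hc B hB
  have hABi : (A ∩ B).card = k - 1 := hi A hA B hB hAB
  have hUcard : (A ∪ B).card = k + 1 := by
    have := Finset.card_inter_add_card_union A B
    omega
  have hAne : A.Nonempty := by
    rw [← Finset.card_pos, hAk]; omega
  have hsupA : A ⊆ C.sup id := Finset.le_sup (f := id) hA
  have hsupB : B ⊆ C.sup id := Finset.le_sup (f := id) hB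
  by_cases hstar : ∀ X ∈ C, X ⊆ A ∪ B
  · -- all members inside a (k+1)-set
    have hcard1 : ∀ X ∈ C, ((A ∪ B) \ X).card = 1 := by
      intro X hX
      rw [Finset.card_sdiff_of_subset (hstar X hX), hUcard, hc X hX]; omega
    apply Finset.card_le_card_of_injOn
      (fun X => if h : ((A ∪ B) \ X).Nonempty then ((A ∪ B) \ X).min' h else A.min' hAne)
    · intro X hX
      have hne : ((A ∪ B) \ X).Nonempty := by
        rw [← Finset.card_pos, hcard1 X hX]; omega
      simp only [dif_pos hne]
      have := Finset.min'_mem _ hne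
      exact (Finset.union_subset hsupA hsupB) (Finset.mem_sdiff.mp this).1
    · intro X hX Y hY hf
      have hneX : ((A ∪ B) \ X).Nonempty := by
        rw [← Finset.card_pos, hcard1 X hX]; omega
      have hneY : ((A ∪ B) \ Y).Nonempty := by
        rw [← Finset.card_pos, hcard1 Y hY]; omega
      simp only [dif_pos hneX, dif_pos hneY] at hf
      obtain ⟨a, ha⟩ := Finset.card_eq_one.mp (hcard1 X hX)
      obtain ⟨b, hb⟩ := Finset.card_eq_one.mp (hcard1 Y hY)
      have h2 : (A ∪ B) \ X = (A ∪ B) \ Y := by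
        have hmX : ((A ∪ B) \ X).min' hneX ∈ ({a} : Finset (Fin n)) := by
          rw [← ha]; exact Finset.min'_mem _ hneX
        have hmY : ((A ∪ B) \ Y).min' hneY ∈ ({b} : Finset (Fin n)) := by
          rw [← hb]; exact Finset.min'_mem _ hneY
        rw [Finset.mem_singleton] at hmX hmY
        rw [ha, hb, show a = b from hmX ▸ hmY ▸ hf]
      have h3 := congrArg (fun s => (A ∪ B) \ s) h2
      simpa [Finset.sdiff_sdiff_eq_self (hstar X hX),
        Finset.sdiff_sdiff_eq_self (hstar Y hY)] using h3
  · -- common core A ∩ B of size k-1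
    push_neg at hstar
    obtain ⟨X₀, hX₀, hX₀n⟩ := hstar
    have dich : ∀ X ∈ C, A ∩ B ⊆ X ∨ X ⊆ A ∪ B := by
      intro X hX
      by_cases hXA : X = A
      · exact Or.inl (hXA ▸ Finset.inter_subset_left)
      by_cases hXB : X = B
      · exact Or.inl (hXB ▸ Finset.inter_subset_right)
      have hXk := hc X hX
      have hXAi : (X ∩ A).card = k - 1 := hi X hX A hA hXA
      have hXBi : (X ∩ B).card = k - 1 := hi X hX B hB hXB
      by_cases hq : X ∩ A = X ∩ B
      · left
        have hsub : X ∩ A ⊆ A ∩ B :=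
          Finset.subset_inter Finset.inter_subset_right (hq ▸ Finset.inter_subset_right)
        have he : X ∩ A = A ∩ B := Finset.eq_of_subset_of_card_le hsub (by omega)
        exact he ▸ Finset.inter_subset_left
      · right
        have hlt : ((X ∩ A) ∩ (X ∩ B)).card < k - 1 := by
          by_contra hge
          push_neg at hge
          have he : (X ∩ A) ∩ (X ∩ B) = X ∩ A :=
            Finset.eq_of_subset_of_card_le Finset.inter_subset_left (by omega)
          have h2 : X ∩ A ⊆ X ∩ B := he ▸ Finset.inter_subset_right
          exact hq (Finset.eq_of_subset_of_card_le h2 (by omega))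
        have hun : k ≤ ((X ∩ A) ∪ (X ∩ B)).card := by
          have := Finset.card_inter_add_card_union (X ∩ A) (X ∩ B)
          omega
        have hXU : X ∩ (A ∪ B) = X := by
          apply Finset.eq_of_subset_of_card_le Finset.inter_subset_left
          rw [Finset.inter_union_distrib_left]
          omega
        exact hXU ▸ Finset.inter_subset_right
    have hcore0 : A ∩ B ⊆ X₀ := (dich X₀ hX₀).resolve_right hX₀n
    have hX₀A : X₀ ∩ A = A ∩ B := by
      have h1 : X₀ ≠ A := fun h => hX₀n (h ▸ Finset.subset_union_left)
      have h2 : A ∩ B ⊆ X₀ ∩ A := Finset.subset_inter hcore0 Finset.inter_subset_left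
      have h3 := hi X₀ hX₀ A hA h1
      exact (Finset.eq_of_subset_of_card_le h2 (by omega)).symm
    have hX₀B : X₀ ∩ B = A ∩ B := by
      have h1 : X₀ ≠ B := fun h => hX₀n (h ▸ Finset.subset_union_right)
      have h2 : A ∩ B ⊆ X₀ ∩ B := Finset.subset_inter hcore0 Finset.inter_subset_right
      have h3 := hi X₀ hX₀ B hB h1
      exact (Finset.eq_of_subset_of_card_le h2 (by omega)).symm
    have hkey : ∀ X ∈ C, A ∩ B ⊆ X := by
      intro X hX
      rcases dich X hX with h | h
      · exact h
      by_cases hXA : X = A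
      · exact hXA ▸ Finset.inter_subset_left
      by_cases hXB : X = B
      · exact hXB ▸ Finset.inter_subset_right
      have hXne : X ≠ X₀ := fun he => hX₀n (he ▸ h)
      have hXX₀ : (X ∩ X₀).card = k - 1 := hi X hX X₀ hX₀ hXne
      have e1 : X₀ ∩ (A ∪ B) = A ∩ B := by
        rw [Finset.inter_union_distrib_left, hX₀A, hX₀B, Finset.union_self]
      have e2 : X ∩ X₀ = X ∩ (A ∩ B) := by
        rw [← e1, Finset.inter_comm X₀ (A ∪ B), ← Finset.inter_assoc,
          Finset.inter_eq_left.mpr h]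
      have e3 : X ∩ (A ∩ B) = A ∩ B := by
        apply Finset.eq_of_subset_of_card_le Finset.inter_subset_right
        rw [← e2]
        omega
      exact e3 ▸ Finset.inter_subset_left
    -- injection via the unique extra element
    have hcard1 : ∀ X ∈ C, (X \ (A ∩ B)).card = 1 := by
      intro X hX
      rw [Finset.card_sdiff_of_subset (hkey X hX), hc X hX, hABi]; omega
    apply Finset.card_le_card_of_injOn
      (fun X => if h : (X \ (A ∩ B)).Nonempty then (X \ (A ∩ B)).min' h else A.min' hAne)
    · intro X hX
      have hne : (X \ (A ∩ B)).Nonempty := by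
        rw [← Finset.card_pos, hcard1 X hX]; omega
      simp only [dif_pos hne]
      have := Finset.min'_mem _ hne
      exact (Finset.le_sup (f := id) hX) (Finset.mem_sdiff.mp this).1
    · intro X hX Y hY hf
      have hneX : (X \ (A ∩ B)).Nonempty := by
        rw [← Finset.card_pos, hcard1 X hX]; omega
      have hneY : (Y \ (A ∩ B)).Nonempty := by
        rw [← Finset.card_pos, hcard1 Y hY]; omega
      simp only [dif_pos hneX, dif_pos hneY] at hf
      obtain ⟨a, ha⟩ := Finset.card_eq_one.mp (hcard1 X hX)
      obtain ⟨b, hb⟩ := Finset.card_eq_one.mp (hcard1 Y hY)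
      have h2 : X \ (A ∩ B) = Y \ (A ∩ B) := by
        have hmX : (X \ (A ∩ B)).min' hneX ∈ ({a} : Finset (Fin n)) := by
          rw [← ha]; exact Finset.min'_mem _ hneX
        have hmY : (Y \ (A ∩ B)).min' hneY ∈ ({b} : Finset (Fin n)) := by
          rw [← hb]; exact Finset.min'_mem _ hneY
        rw [Finset.mem_singleton] at hmX hmY
        rw [ha, hb, show a = b from hmX ▸ hmY ▸ hf]
      have h3 : (A ∩ B) ∪ (X \ (A ∩ B)) = (A ∩ B) ∪ (Y \ (A ∩ B)) := by rw [h2]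
      rwa [Finset.union_sdiff_of_subset (hkey X hX),
        Finset.union_sdiff_of_subset (hkey Y hY)] at h3

theorem nbound (n k : ℕ) (hk : 3 ≤ k) (hn : 2 * k < n)
    (S : Finset (Finset (Fin n)))
    (hcard : ∀ A ∈ S, A.card = k)
    (hint : ∀ A ∈ S, ∀ B ∈ S, A ≠ B → (A ∩ B).card = 0 ∨ (A ∩ B).card = k - 1) :
    S.card ≤ n := by
  suffices h : ∀ m (S : Finset (Finset (Fin n))) (T : Finset (Fin n)), S.card ≤ m →
      (∀ A ∈ S, A.card = k) →
      (∀ A ∈ S, ∀ B ∈ S, A ≠ B → (A ∩ B).card = 0 ∨ (A ∩ B).card = k - 1) →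
      (∀ A ∈ S, A ⊆ T) → S.card ≤ T.card by
    have := h S.card S Finset.univ le_rfl hcard hint (fun A _ => Finset.subset_univ A)
    simpa using this
  intro m
  induction m with
  | zero =>
    intro S T hS _ _ _
    omega
  | succ m ih =>
    intro S T hSm hcard hint hsub
    rcases S.eq_empty_or_nonempty with hE | ⟨A, hA⟩
    · simp [hE]
    classical
    set C := S.filter (fun B => (A ∩ B).Nonempty) with hCdef
    have hCS : C ⊆ S := Finset.filter_subset _ _
    have hAC : A ∈ C := by
      rw [hCdef, Finset.mem_filter]
      refine ⟨hA, ?_⟩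
      rw [Finset.inter_self, ← Finset.card_pos, hcard A hA]
      omega
    have hmemC : ∀ X ∈ C, X ∈ S ∧ (A ∩ X).Nonempty := by
      intro X hX
      rw [hCdef, Finset.mem_filter] at hX
      exact hX
    have hinterA : ∀ X ∈ C, X ≠ A → (A ∩ X).card = k - 1 := by
      intro X hX hXA
      obtain ⟨hXS, hXne⟩ := hmemC X hX
      rcases hint A hA X hXS (fun h => hXA h.symm) with h | h
      · rw [Finset.card_eq_zero] at h
        exact absurd h (Finset.nonempty_iff_ne_empty.mp hXne)
      · exact h
    have hCk : ∀ X ∈ C, ∀ Y ∈ C, X ≠ Y → (X ∩ Y).card = k - 1 := by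
      intro X hX Y hY hXY
      obtain ⟨hXS, _⟩ := hmemC X hX
      obtain ⟨hYS, _⟩ := hmemC Y hY
      rcases hint X hXS Y hYS hXY with h | h
      · exfalso
        rw [Finset.card_eq_zero] at h
        by_cases hXA : X = A
        · subst hXA
          have := (hmemC Y hY).2
          rw [h] at this
          exact Finset.not_nonempty_empty this
        by_cases hYA : Y = A
        · subst hYA
          have := (hmemC X hX).2
          rw [Finset.inter_comm, h] at this
          exact Finset.not_nonempty_empty this
        · have h1 := hinterA X hX hXA
          have h2 := hinterA Y hY hYA
          have hsub : (A ∩ X) ∩ (A ∩ Y) ⊆ X ∩ Y :=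
            Finset.subset_inter
              (Finset.inter_subset_left.trans Finset.inter_subset_right)
              (Finset.inter_subset_right.trans Finset.inter_subset_right)
          have hub : ((A ∩ X) ∪ (A ∩ Y)).card ≤ k := by
            have : (A ∩ X) ∪ (A ∩ Y) ⊆ A :=
              Finset.union_subset Finset.inter_subset_left Finset.inter_subset_left
            calc ((A ∩ X) ∪ (A ∩ Y)).card ≤ A.card := Finset.card_le_card this
              _ = k := hcard A hA
          have hie := Finset.card_inter_add_card_union (A ∩ X) (A ∩ Y)
          have hpos : 0 < ((A ∩ X) ∩ (A ∩ Y)).card := by omega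
          have : 0 < (X ∩ Y).card := lt_of_lt_of_le hpos (Finset.card_le_card hsub)
          rw [h] at this
          simp at this
      · exact h
    have hCbound : C.card ≤ (C.sup id).card :=
      comp_bound hk C (fun X hX => hcard X (hCS hX)) hCk
    set U := C.sup id with hUdef
    have hUT : U ⊆ T := Finset.sup_le (fun X hX => hsub X (hCS hX))
    set S' := S \ C with hS'def
    have hS'sub : ∀ B ∈ S', B ⊆ T \ U := by
      intro B hB
      rw [hS'def, Finset.mem_sdiff] at hB
      obtain ⟨hBS, hBC⟩ := hB
      have hBAe : A ∩ B = ∅ := by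
        by_contra hne
        exact hBC (by rw [hCdef, Finset.mem_filter]
                      exact ⟨hBS, Finset.nonempty_iff_ne_empty.mpr hne⟩)
      intro x hx
      rw [Finset.mem_sdiff]
      refine ⟨hsub B hBS hx, ?_⟩
      intro hxU
      rw [hUdef] at hxU
      obtain ⟨X, hXC, hxX⟩ := Finset.mem_sup.mp hxU
      have hBX : B ≠ X := by
        intro h
        exact hBC (h ▸ hXC)
      have hBXcard : (B ∩ X).card = k - 1 := by
        obtain ⟨hXS, _⟩ := hmemC X hXC
        rcases hint B hBS X hXS hBX with h | h
        · exfalso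
          rw [Finset.card_eq_zero] at h
          have : x ∈ B ∩ X := Finset.mem_inter.mpr ⟨hx, hxX⟩
          rw [h] at this
          simp at this
        · exact h
      by_cases hXA : X = A
      · have : x ∈ A ∩ B := Finset.mem_inter.mpr ⟨hXA ▸ hxX, hx⟩
        rw [hBAe] at this
        simp at this
      · have h1 := hinterA X hXC hXA
        have hsub2 : (A ∩ X) ∩ (B ∩ X) ⊆ A ∩ B :=
          Finset.subset_inter
            (Finset.inter_subset_left.trans Finset.inter_subset_left)
            (Finset.inter_subset_right.trans Finset.inter_subset_left)
        have hub : ((A ∩ X) ∪ (B ∩ X)).card ≤ k := by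
          have hXS := (hmemC X hXC).1
          have : (A ∩ X) ∪ (B ∩ X) ⊆ X :=
            Finset.union_subset Finset.inter_subset_right Finset.inter_subset_right
          calc ((A ∩ X) ∪ (B ∩ X)).card ≤ X.card := Finset.card_le_card this
            _ = k := hcard X hXS
        have hie := Finset.card_inter_add_card_union (A ∩ X) (B ∩ X)
        have hpos : 0 < ((A ∩ X) ∩ (B ∩ X)).card := by omega
        have h2 : 0 < (A ∩ B).card := lt_of_lt_of_le hpos (Finset.card_le_card hsub2)
        rw [hBAe] at h2
        simp at h2
    have hS'card : S'.card ≤ (T \ U).card := by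
      apply ih S' (T \ U)
      · have h1 : S'.card + C.card = S.card := by
          rw [hS'def]
          exact Finset.card_sdiff_add_card_eq_card hCS
        have h2 : 0 < C.card := Finset.card_pos.mpr ⟨A, hAC⟩
        omega
      · intro X hX
        exact hcard X (Finset.mem_sdiff.mp hX).1
      · intro X hX Y hY hXY
        exact hint X (Finset.mem_sdiff.mp hX).1 Y (Finset.mem_sdiff.mp hY).1 hXY
      · exact hS'sub
    have h1 : S'.card + C.card = S.card := by
      rw [hS'def]
      exact Finset.card_sdiff_add_card_eq_card hCS
    have h2 : (T \ U).card = T.card - U.card := Finset.card_sdiff_of_subset hUT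
    have h3 : U.card ≤ T.card := Finset.card_le_card hUT
    omega
end

section
/- There is a function f such that for all k ≥ 3 and n ≥ f(k): if S is a family of k-subsets of {1,...,n} in which any two distinct members intersect in 0 or k-1 points, and T is a family of k-subsets in which any two distinct members intersect in at least 1 and at most k-2 points, then |S| * |T| < binom(n, k). -/
open Finset

lemma T_bound {k n : ℕ} (hk : 3 ≤ k) (hkn : k ≤ n)
    (T : Finset (Finset (Fin n)))
    (hTcard : ∀ A ∈ T, A.card = k)
    (hT : ∀ A ∈ T, ∀ B ∈ T, A ≠ B → 1 ≤ (A ∩ B).card ∧ (A ∩ B).card ≤ k - 2) :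
    T.card ≤ 1 + k * (n - 1).choose (k - 2) := by
  classical
  rcases T.eq_empty_or_nonempty with rfl | ⟨A₀, hA₀⟩
  · simp
  set 𝒟 : Finset (Finset (Fin n)) :=
    A₀.biUnion (fun a => (Finset.univ.powersetCard (k-1)).filter (fun D => a ∈ D)) with h𝒟
  have key : (T.erase A₀).card ≤ 𝒟.card := by
    apply card_le_card_of_injOn
      (fun B => if h : (B \ A₀).Nonempty then B.erase ((B \ A₀).min' h) else B)
    · intro B hB
      have hBT : B ∈ T := mem_of_mem_erase hB
      have hBne : B ≠ A₀ := ne_of_mem_erase hB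
      obtain ⟨h1, h2⟩ := hT B hBT A₀ hA₀ hBne
      have hBk : B.card = k := hTcard B hBT
      have hsd : (B \ A₀).card + (B ∩ A₀).card = k := by
        rw [card_sdiff_add_card_inter, hBk]
      have hne : (B \ A₀).Nonempty := by
        rw [← card_pos]; omega
      simp only [mem_coe]
      rw [dif_pos hne]
      set x := (B \ A₀).min' hne with hx
      have hxB : x ∈ B \ A₀ := min'_mem _ _
      obtain ⟨a, ha⟩ : (B ∩ A₀).Nonempty := by rw [← card_pos]; omega
      rw [mem_inter] at ha
      rw [mem_sdiff] at hxB
      refine mem_biUnion.2 ⟨a, ha.2, ?_⟩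
      rw [mem_filter, mem_powersetCard]
      refine ⟨⟨subset_univ _, ?_⟩, ?_⟩
      · rw [card_erase_of_mem hxB.1, hBk]
      · exact mem_erase.2 ⟨fun h => hxB.2 (h ▸ ha.2), ha.1⟩
    · intro B hB B' hB' heq
      dsimp only at heq
      by_contra hne
      rw [mem_coe, mem_erase] at hB hB'
      have hBT : B ∈ T := hB.2
      have hB'T : B' ∈ T := hB'.2
      have hBk : B.card = k := hTcard B hBT
      obtain ⟨h1, h2⟩ := hT B hBT B' hB'T hne
      -- f B ⊆ B and f B ⊆ B'
      have hsub : ∀ C : Finset (Fin n),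
          (if h : (C \ A₀).Nonempty then C.erase ((C \ A₀).min' h) else C) ⊆ C := by
        intro C
        split
        · exact erase_subset _ _
        · exact Subset.rfl
      have hfB := hsub B
      have hfB' : (if h : (B \ A₀).Nonempty then B.erase ((B \ A₀).min' h) else B) ⊆ B' := by
        rw [heq]; exact hsub B'
      have hcard : (B ∩ B').card ≥
          (if h : (B \ A₀).Nonempty then B.erase ((B \ A₀).min' h) else B).card :=
        card_le_card (subset_inter hfB hfB')
      have hfcard : (if h : (B \ A₀).Nonempty then B.erase ((B \ A₀).min' h) else B).card ≥ k - 1 := by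
        split
        · rw [card_erase_of_mem (mem_sdiff.1 (min'_mem _ _)).1, hBk]
        · omega
      omega
  have hD : 𝒟.card ≤ k * (n - 1).choose (k - 2) := by
    calc 𝒟.card ≤ ∑ a ∈ A₀, ((Finset.univ.powersetCard (k-1)).filter (fun D => a ∈ D)).card :=
          card_biUnion_le
    _ ≤ ∑ a ∈ A₀, (n - 1).choose (k - 2) := by
        apply sum_le_sum
        intro a _
        have : ((Finset.univ.powersetCard (k-1)).filter (fun D => a ∈ D)).card ≤
            ((Finset.univ.erase a).powersetCard (k-2)).card := by
          apply card_le_card_of_injOn (fun D => D.erase a)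
          · intro D hD
            rw [mem_coe, mem_filter, mem_powersetCard] at hD
            simp only [mem_coe, mem_powersetCard]
            constructor
            · intro x hx
              rw [mem_erase] at hx ⊢
              exact ⟨hx.1, mem_univ x⟩
            · rw [card_erase_of_mem hD.2, hD.1.2]; omega
          · intro D hD D' hD' heq
            dsimp only at heq
            rw [mem_coe, mem_filter] at hD hD'
            rw [← insert_erase hD.2, heq, insert_erase hD'.2]
        rw [card_powersetCard, card_erase_of_mem (mem_univ a), card_univ, Fintype.card_fin] at this
        exact this
    _ = k * (n - 1).choose (k - 2) := by
        rw [sum_const, hTcard A₀ hA₀, smul_eq_mul]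
  have : (T.erase A₀).card + 1 = T.card := card_erase_add_one hA₀
  omega

lemma S_bound {k n : ℕ} (hk : 3 ≤ k)
    (S : Finset (Finset (Fin n)))
    (hScard : ∀ A ∈ S, A.card = k)
    (hS : ∀ A ∈ S, ∀ B ∈ S, A ≠ B → (A ∩ B).card = 0 ∨ (A ∩ B).card = k - 1) :
    S.card ≤ (k + 1) * n := by
  classical
  rcases S.eq_empty_or_nonempty with rfl | ⟨A₁, hA₁⟩
  · simp
  have hn : 0 < n := by
    by_contra h
    have : A₁.card = k := hScard A₁ hA₁
    have : A₁ ⊆ univ := subset_univ _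
    have hle := card_le_card this
    rw [card_univ, Fintype.card_fin] at hle
    omega
  set a₀ : Fin n := ⟨0, hn⟩ with ha₀
  set R : Finset (Fin n) → Finset (Fin n) → Prop :=
    fun A B => A = B ∨ (A ∩ B).Nonempty with hR
  have hsymm : ∀ A B, R A B → R B A := by
    intro A B h
    rcases h with rfl | h
    · exact Or.inl rfl
    · exact Or.inr (by rwa [inter_comm])
  have hinter : ∀ A ∈ S, ∀ B ∈ S, A ≠ B → (A ∩ B).Nonempty → (A ∩ B).card = k - 1 := by
    intro A hA B hB hne hN
    rcases hS A hA B hB hne with h | h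
    · rw [← card_pos] at hN; omega
    · exact h
  have htrans : ∀ A ∈ S, ∀ B ∈ S, ∀ C ∈ S, R A B → R B C → R A C := by
    intro A hA B hB C hC hAB hBC
    rcases hAB with rfl | hAB
    · exact hBC
    rcases hBC with rfl | hBC
    · exact Or.inr hAB
    by_cases hAC : A = C
    · exact Or.inl hAC
    by_cases hABe : A = B
    · subst hABe; exact Or.inr hBC
    by_cases hBCe : B = C
    · subst hBCe; exact Or.inr hAB
    have h1 : (A ∩ B).card = k - 1 := hinter A hA B hB hABe hAB
    have h2 : (B ∩ C).card = k - 1 := hinter B hB C hC hBCe hBC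
    have hBk := hScard B hB
    have e1 : (B \ A).card + (B ∩ A).card = k := by
      rw [card_sdiff_add_card_inter, hBk]
    have e2 : (B \ C).card + (B ∩ C).card = k := by
      rw [card_sdiff_add_card_inter, hBk]
    rw [inter_comm] at h1
    have hsub : B ⊆ (B \ A) ∪ (B \ C) ∪ (A ∩ C) := by
      intro x hx
      rw [mem_union, mem_union, mem_sdiff, mem_sdiff, mem_inter]
      by_cases hxA : x ∈ A
      · by_cases hxC : x ∈ C
        · exact Or.inr ⟨hxA, hxC⟩
        · exact Or.inl (Or.inr ⟨hx, hxC⟩)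
      · exact Or.inl (Or.inl ⟨hx, hxA⟩)
    have hle : B.card ≤ (B \ A).card + (B \ C).card + (A ∩ C).card :=
      le_trans (card_le_card hsub)
        (le_trans (card_union_le _ _) (by gcongr; exact card_union_le _ _))
    right
    rw [← card_pos]
    omega
  set cls : Finset (Fin n) → Finset (Finset (Fin n)) :=
    fun A => S.filter (fun B => R A B) with hcls
  set U : Finset (Fin n) → Finset (Fin n) := fun A => (cls A).biUnion id with hU
  have hmemcls : ∀ A ∈ S, A ∈ cls A := by
    intro A hA
    rw [hcls]; rw [mem_filter]
    exact ⟨hA, Or.inl rfl⟩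
  have hsubU : ∀ A, ∀ B ∈ cls A, B ⊆ U A := by
    intro A B hB x hx
    exact mem_biUnion.2 ⟨B, hB, hx⟩
  have hclseq : ∀ A ∈ S, ∀ B ∈ S, R A B → cls A = cls B := by
    intro A hA B hB hAB
    ext C
    simp only [hcls, mem_filter, and_congr_right_iff]
    intro hC
    constructor
    · intro h; exact htrans B hB A hA C hC (hsymm A B hAB) h
    · intro h; exact htrans A hA B hB C hC hAB h
  have hUdisj : ∀ A ∈ S, ∀ B ∈ S, ¬ R A B → Disjoint (U A) (U B) := by
    intro A hA B hB hnR
    rw [disjoint_left]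
    intro x hxA hxB
    obtain ⟨C, hC, hxC⟩ := mem_biUnion.1 hxA
    obtain ⟨D, hD, hxD⟩ := mem_biUnion.1 hxB
    rw [hcls] at hC hD
    rw [mem_filter] at hC hD
    apply hnR
    have hCD : R C D := Or.inr ⟨x, mem_inter.2 ⟨hxC, hxD⟩⟩
    exact htrans A hA D hD.1 B hB
      (htrans A hA C hC.1 D hD.1 hC.2 hCD) (hsymm B D hD.2)
  -- size of a class
  have hclscard : ∀ A ∈ S, (cls A).card ≤ 1 + k * (U A).card := by
    intro A hA
    have hAk := hScard A hA
    -- structure of members of cls A \ {A}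
    have hmem : ∀ B ∈ (cls A).erase A, ∃ hab : (A \ B).Nonempty ∧ (B \ A).Nonempty,
        B = insert ((B \ A).min' hab.2) (A.erase ((A \ B).min' hab.1)) := by
      intro B hB
      rw [mem_erase] at hB
      obtain ⟨hBne, hBc⟩ := hB
      rw [hcls, mem_filter] at hBc
      obtain ⟨hBS, hRB⟩ := hBc
      have hNe : (A ∩ B).Nonempty := by
        rcases hRB with h | h
        · exact absurd h.symm hBne
        · exact h
      have hi : (A ∩ B).card = k - 1 := hinter A hA B hBS (fun h => hBne h.symm) hNe
      have hBk := hScard B hBS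
      have eA : (A \ B).card + (A ∩ B).card = k := by
        rw [card_sdiff_add_card_inter, hAk]
      have eB : (B \ A).card + (B ∩ A).card = k := by
        rw [card_sdiff_add_card_inter, hBk]
      rw [inter_comm] at eB
      have h1 : (A \ B).card = 1 := by omega
      have h2 : (B \ A).card = 1 := by omega
      have hab : (A \ B).Nonempty ∧ (B \ A).Nonempty := by
        constructor <;> [skip; skip] <;> rw [← card_pos] <;> omega
      refine ⟨hab, ?_⟩
      obtain ⟨a, hsa⟩ := card_eq_one.1 h1
      obtain ⟨x, hsx⟩ := card_eq_one.1 h2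
      have hma : (A \ B).min' hab.1 = a := by simp [hsa]
      have hmx : (B \ A).min' hab.2 = x := by simp [hsx]
      rw [hma, hmx]
      -- B = insert x (A.erase a)
      have hBsplit : B = (B ∩ A) ∪ (B \ A) := by
        ext y
        simp only [mem_union, mem_inter, mem_sdiff]
        tauto
      have hIA : B ∩ A = A.erase a := by
        have : A.erase a = A \ {a} := (sdiff_singleton_eq_erase a A).symm
        rw [this, ← hsa]
        ext y
        simp only [mem_inter, mem_sdiff]
        tauto
      rw [hBsplit, hIA, hsx]
      ext y
      simp only [mem_union, mem_insert, mem_singleton, mem_erase]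
      tauto
    have hstep : ((cls A).erase A).card ≤ (A ×ˢ (U A)).card := by
      apply card_le_card_of_injOn
        (fun B => (if h : (A \ B).Nonempty then (A \ B).min' h else a₀,
                   if h : (B \ A).Nonempty then (B \ A).min' h else a₀))
      · intro B hB
        obtain ⟨hab, hstruct⟩ := hmem B hB
        simp only [mem_coe]
        rw [dif_pos hab.1, dif_pos hab.2]
        rw [mem_product]
        constructor
        · exact (mem_sdiff.1 (min'_mem _ hab.1)).1
        · apply hsubU A B (mem_of_mem_erase hB)
          exact (mem_sdiff.1 (min'_mem _ hab.2)).1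
      · intro B hB B' hB' heq
        rw [mem_coe] at hB hB'
        obtain ⟨hab, hstruct⟩ := hmem B hB
        obtain ⟨hab', hstruct'⟩ := hmem B' hB'
        dsimp only at heq
        rw [dif_pos hab.1, dif_pos hab.2, dif_pos hab'.1, dif_pos hab'.2] at heq
        rw [Prod.mk.injEq] at heq
        rw [hstruct, hstruct', heq.1, heq.2]
    rw [card_product] at hstep
    have := card_erase_add_one (hmemcls A hA)
    rw [hAk] at hstep
    omega
  -- sum over fibers of U
  have hfib : S.card = ∑ u ∈ S.image U, (S.filter (fun A => U A = u)).card :=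
    card_eq_sum_card_fiberwise (fun A hA => mem_image_of_mem _ hA)
  have hfibcard : ∀ u ∈ S.image U, (S.filter (fun A => U A = u)).card ≤ (k+1) * u.card := by
    intro u hu
    obtain ⟨A, hA, rfl⟩ := mem_image.1 hu
    have hsub : S.filter (fun A' => U A' = U A) ⊆ cls A := by
      intro A' hA'
      rw [mem_filter] at hA'
      obtain ⟨hA'S, hUU⟩ := hA'
      rw [hcls, mem_filter]
      refine ⟨hA'S, ?_⟩
      by_contra hnR
      have hdisj := hUdisj A hA A' hA'S hnR
      rw [hUU] at hdisj
      have hANe : (U A).Nonempty := by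
        obtain ⟨x, hx⟩ : A.Nonempty := by
          rw [← card_pos, hScard A hA]; omega
        exact ⟨x, hsubU A A (hmemcls A hA) hx⟩
      rw [disjoint_self] at hdisj
      rw [hdisj] at hANe
      exact not_nonempty_empty hANe
    have hUNe : 1 ≤ (U A).card := by
      obtain ⟨x, hx⟩ : A.Nonempty := by
        rw [← card_pos, hScard A hA]; omega
      have := card_pos.2 ⟨x, hsubU A A (hmemcls A hA) hx⟩
      omega
    calc (S.filter (fun A' => U A' = U A)).card ≤ (cls A).card := card_le_card hsub
      _ ≤ 1 + k * (U A).card := hclscard A hA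
      _ ≤ (k+1) * (U A).card := by nlinarith
  have hsum : ∑ u ∈ S.image U, u.card ≤ n := by
    have hdisj : ∀ u ∈ S.image U, ∀ v ∈ S.image U, u ≠ v → Disjoint (id u) (id v) := by
      intro u hu v hv huv
      obtain ⟨A, hA, rfl⟩ := mem_image.1 hu
      obtain ⟨B, hB, rfl⟩ := mem_image.1 hv
      apply hUdisj A hA B hB
      intro hRAB
      apply huv
      simp only [hU]
      rw [hclseq A hA B hB hRAB]
    have := card_biUnion hdisj
    simp only [id] at this
    rw [← this]
    have : (S.image U).biUnion id ⊆ univ := subset_univ _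
    have hle := card_le_card this
    rw [card_univ, Fintype.card_fin] at hle
    exact hle
  calc S.card = ∑ u ∈ S.image U, (S.filter (fun A => U A = u)).card := hfib
    _ ≤ ∑ u ∈ S.image U, (k+1) * u.card := sum_le_sum hfibcard
    _ = (k+1) * ∑ u ∈ S.image U, u.card := by rw [mul_sum]
    _ ≤ (k+1) * n := by
        apply Nat.mul_le_mul_left
        exact hsum

lemma arith_bound {k n : ℕ} (hk : 3 ≤ k) (hn : 16 * k ^ 4 ≤ n) :
    (k + 1) * n * (1 + k * (n - 1).choose (k - 2)) < n.choose k := by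
  obtain ⟨j, rfl⟩ : ∃ j, k = j + 3 := ⟨k - 3, by omega⟩
  have ht4 : (j + 3) ≤ (j + 3) ^ 4 := by
    calc j + 3 = (j + 3) ^ 1 := (pow_one _).symm
      _ ≤ (j + 3) ^ 4 := Nat.pow_le_pow_right (by omega) (by omega)
  have hkn : j + 3 ≤ n := by nlinarith
  set m : ℕ := n - (j + 3) with hm_def
  have hnm : n = m + (j + 3) := by omega
  have hm : 4 * (j + 3) ^ 4 + (j + 3) ≤ m := by nlinarith
  set Q : ℕ := n.choose (j + 1) with hQ
  have hQpos : 0 < Q := Nat.choose_pos (by omega)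
  set P : ℕ := (n - 1).choose (j + 1) with hP
  have hPQ : P ≤ Q := Nat.choose_le_choose _ (by omega)
  rw [show j + 3 - 2 = j + 1 from by omega, show j + 3 + 1 = j + 4 from by omega]
  have key : 2 * (j + 4) * (j + 3) * (j + 3) * (j + 2) * n < (m + 2) * (m + 1) := by
    have h1 : (j + 4) * (j + 2) ≤ (j + 3) * (j + 3) := by nlinarith
    have h2 : 2 * (j + 4) * (j + 3) * (j + 3) * (j + 2) ≤ 2 * (j + 3) ^ 4 := by nlinarith
    have h3 : n ≤ 2 * m := by omega
    calc 2 * (j + 4) * (j + 3) * (j + 3) * (j + 2) * n ≤ 2 * (j + 3) ^ 4 * (2 * m) :=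
          Nat.mul_le_mul h2 h3
      _ = 4 * (j + 3) ^ 4 * m := by ring
      _ ≤ m * m := Nat.mul_le_mul_right m (by omega)
      _ < (m + 2) * (m + 1) := by nlinarith
  have hid : n.choose (j + 3) * ((j + 3) * (j + 2)) = Q * ((m + 2) * (m + 1)) := by
    have i3 := Nat.choose_succ_right_eq n (j + 2)
    have i2 := Nat.choose_succ_right_eq n (j + 1)
    rw [show n - (j + 2) = m + 1 from by omega] at i3
    rw [show n - (j + 1) = m + 2 from by omega] at i2
    calc n.choose (j + 3) * ((j + 3) * (j + 2))
        = (n.choose (j + 2 + 1) * (j + 2 + 1)) * (j + 2) := by ring_nf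
      _ = (n.choose (j + 2) * (m + 1)) * (j + 2) := by rw [i3]
      _ = (n.choose (j + 1 + 1) * (j + 1 + 1)) * (m + 1) := by ring_nf
      _ = (Q * (m + 2)) * (m + 1) := by rw [i2]
      _ = Q * ((m + 2) * (m + 1)) := by ring
  have hmain : (j + 4) * n * (2 * (j + 3) * Q) < n.choose (j + 3) := by
    refine lt_of_mul_lt_mul_right ?_ (Nat.zero_le ((j + 3) * (j + 2)))
    rw [hid]
    calc (j + 4) * n * (2 * (j + 3) * Q) * ((j + 3) * (j + 2))
        = Q * (2 * (j + 4) * (j + 3) * (j + 3) * (j + 2) * n) := by ring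
      _ < Q * ((m + 2) * (m + 1)) := (mul_lt_mul_iff_right₀ hQpos).2 key
  have hstep : 1 + (j + 3) * P ≤ 2 * (j + 3) * Q := by nlinarith
  calc (j + 4) * n * (1 + (j + 3) * P) ≤ (j + 4) * n * (2 * (j + 3) * Q) :=
        Nat.mul_le_mul_left _ hstep
    _ < n.choose (j + 3) := hmain

theorem special_case :
    ∃ f : ℕ → ℕ, ∀ k n : ℕ, 3 ≤ k → f k ≤ n →
      ∀ S T : Finset (Finset (Fin n)),
        (∀ A ∈ S, A.card = k) →
        (∀ A ∈ S, ∀ B ∈ S, A ≠ B → (A ∩ B).card = 0 ∨ (A ∩ B).card = k - 1) →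
        (∀ A ∈ T, A.card = k) →
        (∀ A ∈ T, ∀ B ∈ T, A ≠ B → 1 ≤ (A ∩ B).card ∧ (A ∩ B).card ≤ k - 2) →
        S.card * T.card < n.choose k := by
  refine ⟨fun k => 16 * k ^ 4, ?_⟩
  intro k n hk hn S T hScard hS hTcard hT
  have hn' : 16 * k ^ 4 ≤ n := hn
  have hkn : k ≤ n := by
    have h1 : k ≤ k ^ 4 := by
      calc k = k ^ 1 := (pow_one _).symm
        _ ≤ k ^ 4 := Nat.pow_le_pow_right (by omega) (by omega)
    have h2 : k ^ 4 ≤ 16 * k ^ 4 := Nat.le_mul_of_pos_left _ (by omega)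
    omega
  calc S.card * T.card ≤ ((k + 1) * n) * (1 + k * (n - 1).choose (k - 2)) :=
        Nat.mul_le_mul (S_bound hk S hScard hS) (T_bound hk hkn T hTcard hT)
    _ < n.choose k := arith_bound hk hn'
end

section
/- Let Γ be a finite vertex-transitive graph on v vertices. If C is a clique and S is an independent set (coclique) in Γ, then |C| * |S| ≤ v. -/
open Finset

theorem clique_coclique_bound {V : Type*} [Fintype V] [DecidableEq V]
    (G : SimpleGraph V)
    (hvt : ∀ u v : V, ∃ φ : G ≃g G, φ u = v)
    (C S : Finset V)
    (hC : G.IsClique (C : Set V))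
    (hS : ∀ u ∈ S, ∀ v ∈ S, u ≠ v → ¬ G.Adj u v) :
    C.card * S.card ≤ Fintype.card V := by
  classical
  rcases C.eq_empty_or_nonempty with rfl | ⟨c0, hc0⟩
  · simp
  rcases S.eq_empty_or_nonempty with rfl | ⟨s0, hs0⟩
  · simp
  haveI : Fintype (G ≃g G) :=
    Fintype.ofInjective (fun φ : G ≃g G => φ.toEquiv) (fun a b h => by
      ext x; exact congrArg (fun e : V ≃ V => e x) h)
  set k : V → V → ℕ := fun a b => (univ.filter fun φ : G ≃g G => φ a = b).card with hk
  -- k is constant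
  have hconst : ∀ a b a' b', k a b = k a' b' := by
    intro a b a' b'
    obtain ⟨ψ1, hψ1⟩ := hvt a' a
    obtain ⟨ψ2, hψ2⟩ := hvt b b'
    refine Finset.card_bij' (fun φ _ => (ψ1.trans φ).trans ψ2)
      (fun φ' _ => (ψ1.symm.trans φ').trans ψ2.symm) ?_ ?_ ?_ ?_
    · intro φ hφ
      simp only [mem_filter, mem_univ, true_and] at hφ ⊢
      simp [RelIso.trans_apply, hψ1, hφ, hψ2]
    · intro φ' hφ'
      simp only [mem_filter, mem_univ, true_and] at hφ' ⊢
      have h1 : ψ1.symm a = a' := ψ1.symm_apply_eq.mpr hψ1.symm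
      have h2 : ψ2.symm b' = b := ψ2.symm_apply_eq.mpr hψ2.symm
      simp [RelIso.trans_apply, h1, hφ', h2]
    · intro φ hφ
      ext x
      simp [RelIso.trans_apply]
    · intro φ' hφ'
      ext x
      simp [RelIso.trans_apply]
  have hsum : ∀ a : V, ∑ b : V, k a b = Fintype.card (G ≃g G) := by
    intro a
    rw [← Finset.card_univ]
    exact (Finset.card_eq_sum_card_fiberwise (f := fun φ : G ≃g G => φ a)
      (fun φ _ => Finset.mem_univ (φ a))).symm
  have hle1 : ∀ φ : G ≃g G, (C.filter fun c => φ c ∈ S).card ≤ 1 := by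
    intro φ
    refine Finset.card_le_one.2 ?_
    intro c hc c' hc'
    simp only [mem_filter] at hc hc'
    by_contra hne
    have hadj : G.Adj c c' := hC (Finset.mem_coe.mpr hc.1) (Finset.mem_coe.mpr hc'.1) hne
    have hadj' : G.Adj (φ c) (φ c') := φ.map_adj_iff.mpr hadj
    exact hS _ hc.2 _ hc'.2 hadj'.ne hadj'
  have hfiber : ∀ c : V, (univ.filter fun φ : G ≃g G => φ c ∈ S).card = ∑ s ∈ S, k c s := by
    intro c
    rw [Finset.card_eq_sum_card_fiberwise (f := fun φ : G ≃g G => φ c) (t := S)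
      (s := univ.filter fun φ : G ≃g G => φ c ∈ S)
      (fun φ hφ => (mem_filter.1 hφ).2)]
    refine Finset.sum_congr rfl fun b hb => ?_
    congr 1
    ext φ
    simp only [hk, mem_filter, mem_univ, true_and, and_iff_right_iff_imp]
    intro h; rw [h]; exact hb
  have key : C.card * S.card * k c0 s0 ≤ Fintype.card V * k c0 s0 := by
    calc C.card * S.card * k c0 s0
        = ∑ c ∈ C, ∑ s ∈ S, k c s := by
          rw [Finset.sum_congr rfl (fun c _ => Finset.sum_congr rfl
            (fun s _ => hconst c s c0 s0))]
          simp [mul_assoc, Finset.sum_const, mul_comm]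
      _ = ∑ c ∈ C, (univ.filter fun φ : G ≃g G => φ c ∈ S).card := by
          exact Finset.sum_congr rfl fun c _ => (hfiber c).symm
      _ = ∑ φ : G ≃g G, (C.filter fun c => φ c ∈ S).card := by
          simp only [Finset.card_filter]
          rw [Finset.sum_comm]
      _ ≤ ∑ _φ : G ≃g G, 1 := Finset.sum_le_sum fun φ _ => hle1 φ
      _ = Fintype.card (G ≃g G) := by simp
      _ = Fintype.card V * k c0 s0 := by
          rw [← hsum c0]
          rw [Finset.sum_congr rfl (fun b _ => hconst c0 b c0 s0)]
          rw [Finset.sum_const, Finset.card_univ, smul_eq_mul]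
  have hk0 : 0 < k c0 s0 := by
    obtain ⟨φ, hφ⟩ := hvt c0 s0
    exact Finset.card_pos.2 ⟨φ, by simp [hk, hφ]⟩
  exact Nat.le_of_mul_le_mul_right key hk0
end
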